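/- For any rational number a with a ∉ {1, -1} and any integer n ≥ 2, the polynomial K_{a,n}(x) = x^n + (1-x)^n + a^n is square-free over ℚ (i.e., gcd(K_{a,n}, K_{a,n}') = 1). -/

import Mathlib

/-!
At a common root `z ∈ ℂ` of `K = K_{a,n}` and `K'` one has `z^(n-1) = (1-z)^(n-1) = -a^n`.
Hence `|z| = |1-z|`, so `conj z = 1 - z` and `m := z(1-z) = |z|²` is a positive real with
`m^(n-1) = a^(2n)`. Every `ℚ`-conjugate of `z` is again a common root, hence a root of
`X² - X + m`; so the minimal polynomial of `z` has degree at most two and `m` is rational.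
Moreover `1/z - 1` and `1/(1-z) - 1` are roots of unity, so `1/m = (1/z)(1/(1-z))` is an
algebraic integer of absolute value at most `4`, i.e. an integer `d ∈ {1, 2, 3, 4}`, and
`d^(n-1) a^(2n) = 1`. For `d = 1` this forces `a = ±1`; for `d = 2, 3, 4` it contradicts
`n ∤ n - 1` after taking `2`- or `3`-adic valuations.
-/

open Polynomial ComplexConjugate

noncomputable def kPoly {R : Type*} [CommRing R] (a : R) (n : ℕ) : R[X] :=
  X ^ n + (1 - X) ^ n + C (a ^ n)

section kPoly

variable {R : Type*} [CommRing R]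

theorem map_kPoly {S : Type*} [CommRing S] (f : R →+* S) (a : R) (n : ℕ) :
    (kPoly a n).map f = kPoly (f a) n := by
  simp [kPoly]

theorem derivative_kPoly (a : R) (n : ℕ) :
    derivative (kPoly a n) = C (n : R) * (X ^ (n - 1) - (1 - X) ^ (n - 1)) := by
  simp [kPoly, derivative_pow]
  ring

theorem derivative_kPoly_ne_zero [IsDomain R] [CharZero R] (a : R) {n : ℕ} (hn : 2 ≤ n) :
    derivative (kPoly a n) ≠ 0 := by
  intro h
  have := congrArg (eval 0) h
  simp [derivative_kPoly, zero_pow (show n - 1 ≠ 0 by omega)] at this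
  omega

theorem pow_pred_eq_of_aeval_kPoly {F : Type*} [Field F] [CharZero F] [Algebra R F] {a : R}
    {z : F} {n : ℕ} (hn : n ≠ 0) (hK : aeval z (kPoly a n) = 0)
    (hK' : aeval z (derivative (kPoly a n)) = 0) :
    z ^ (n - 1) = (1 - z) ^ (n - 1) ∧ z ^ (n - 1) = -algebraMap R F a ^ n := by
  rw [aeval_def, eval₂_eq_eval_map, map_kPoly] at hK
  rw [aeval_def, eval₂_eq_eval_map, ← derivative_map, map_kPoly] at hK'
  simp only [derivative_kPoly, eval_mul, eval_sub, eval_C, eval_pow, eval_X, eval_one,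
    mul_eq_zero, Nat.cast_eq_zero, hn, false_or, sub_eq_zero] at hK'
  refine ⟨hK', ?_⟩
  obtain ⟨m, rfl⟩ := Nat.exists_eq_succ_of_ne_zero hn
  simp only [kPoly, eval_add, eval_pow, eval_X, eval_sub, eval_one, eval_C] at hK
  rw [Nat.succ_sub_one] at hK' ⊢
  rw [pow_succ, pow_succ (1 - z)] at hK
  linear_combination hK + (1 - z) * hK'

end kPoly

section minpoly

variable {K L : Type*} [Field K] [Field L] [Algebra K L] {x : L}

theorem minpoly_map_dvd_of_forall_isRoot [PerfectField K] [IsAlgClosed L] (hx : IsIntegral K x)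
    {q : L[X]} (hq : q ≠ 0)
    (h : ∀ w, ((minpoly K x).map (algebraMap K L)).IsRoot w → q.IsRoot w) :
    (minpoly K x).map (algebraMap K L) ∣ q := by
  have hp : (minpoly K x).map (algebraMap K L) ≠ 0 := map_ne_zero (minpoly.ne_zero hx)
  rw [IsAlgClosed.dvd_iff_roots_le_roots hp hq, Multiset.le_iff_subset
    (nodup_roots (PerfectField.separable_of_irreducible (minpoly.irreducible hx)).map)]
  intro w hw
  exact (mem_roots hq).2 (h w ((mem_roots hp).1 hw))

theorem exists_algebraMap_eq_of_minpoly_map_dvd {m : L} (hx : IsIntegral K x)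
    (h : (minpoly K x).map (algebraMap K L) ∣ X ^ 2 - X + C m) :
    ∃ r : K, algebraMap K L r = m := by
  have hq : (X ^ 2 - X + C m : L[X]).Monic := by monicity!
  have hq2 : (X ^ 2 - X + C m : L[X]).natDegree = 2 := by compute_degree!
  have hxq : x ^ 2 - x + m = 0 := by
    obtain ⟨r, hr⟩ := h
    have := congrArg (eval x) hr
    rw [eval_mul, eval_map_algebraMap, minpoly.aeval, zero_mul] at this
    simpa using this
  have hdeg : (minpoly K x).natDegree ≤ 2 := by
    rw [← hq2, ← natDegree_map (algebraMap K L)]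
    exact natDegree_le_of_dvd h hq.ne_zero
  rcases (show (minpoly K x).natDegree = 1 ∨ (minpoly K x).natDegree = 2 by
    have := minpoly.natDegree_pos hx; omega) with h1 | h2
  · obtain ⟨y, rfl⟩ := minpoly.natDegree_eq_one_iff.1 h1
    exact ⟨y - y ^ 2, by rw [map_sub, map_pow]; linear_combination -hxq⟩
  · have := eq_of_monic_of_dvd_of_natDegree_le ((minpoly.monic hx).map _) hq h
      (by rw [hq2, natDegree_map, h2])
    exact ⟨(minpoly K x).coeff 0, by simpa using congrArg (coeff · 0) this.symm⟩

end minpoly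

namespace Complex

variable {z : ℂ} {N : ℕ}

theorem conj_eq_one_sub_of_pow_eq (hN : N ≠ 0) (h : z ^ N = (1 - z) ^ N) :
    conj z = 1 - z := by
  have hnorm : ‖z‖ = ‖1 - z‖ :=
    (pow_left_inj₀ (norm_nonneg _) (norm_nonneg _) hN).1 (by rw [← norm_pow, ← norm_pow, h])
  have hre : z.re = 1 / 2 := by
    have := congrArg (· ^ 2) hnorm
    simp only [Complex.sq_norm, normSq_apply, sub_re, sub_im, one_re, one_im] at this
    linarith
  apply Complex.ext <;> simp [hre]
  norm_num

theorem mul_one_sub_eq_normSq_of_pow_eq (hN : N ≠ 0) (h : z ^ N = (1 - z) ^ N) :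
    z * (1 - z) = normSq z := by
  rw [← conj_eq_one_sub_of_pow_eq hN h, mul_conj]

theorem normSq_pow_eq_sq_of_pow_eq {c : ℝ} (hN : N ≠ 0) (h : z ^ N = (1 - z) ^ N)
    (hc : z ^ N = -c) : normSq z ^ N = c ^ 2 := by
  have : ((normSq z ^ N : ℝ) : ℂ) = ((c ^ 2 : ℝ) : ℂ) := by
    push_cast
    rw [← mul_one_sub_eq_normSq_of_pow_eq hN h, mul_pow, ← h, hc]
    ring
  exact_mod_cast this

theorem inv_sub_one_pow_eq_one (hz : z ≠ 0) (h : z ^ N = (1 - z) ^ N) : (z⁻¹ - 1) ^ N = 1 := by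
  rw [show z⁻¹ - 1 = (1 - z) / z by field_simp, div_pow, ← h, div_self (pow_ne_zero _ hz)]

theorem isIntegral_inv_of_pow_eq (hN : N ≠ 0) (hz : z ≠ 0) (h : z ^ N = (1 - z) ^ N) :
    IsIntegral ℤ z⁻¹ := by
  have : IsIntegral ℤ (z⁻¹ - 1) :=
    .of_pow (Nat.pos_of_ne_zero hN) (by rw [inv_sub_one_pow_eq_one hz h]; exact isIntegral_one)
  simpa using this.add isIntegral_one

theorem norm_inv_le_two_of_pow_eq (hN : N ≠ 0) (hz : z ≠ 0) (h : z ^ N = (1 - z) ^ N) :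
    ‖z⁻¹‖ ≤ 2 :=
  calc ‖z⁻¹‖ = ‖(z⁻¹ - 1) + 1‖ := by rw [sub_add_cancel]
    _ ≤ ‖z⁻¹ - 1‖ + ‖(1 : ℂ)‖ := norm_add_le _ _
    _ = 2 := by rw [norm_eq_one_of_pow_eq_one (inv_sub_one_pow_eq_one hz h) hN, norm_one]; norm_num

theorem exists_int_eq_inv_of_pow_eq (hN : N ≠ 0) (h : z ^ N = (1 - z) ^ N) {r : ℚ}
    (hr : (r : ℂ) = z * (1 - z)) : ∃ k : ℤ, (k : ℚ) = r⁻¹ ∧ 0 < k ∧ k ≤ 4 := by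
  have hz : z ≠ 0 := by rintro rfl; simp [zero_pow hN] at h
  have hz' : 1 - z ≠ 0 := by
    intro h'
    obtain rfl := (sub_eq_zero.1 h').symm
    simp [zero_pow hN] at h
  have h' : (1 - z) ^ N = (1 - (1 - z)) ^ N := by rw [sub_sub_cancel, h]
  have hr' : ((r⁻¹ : ℚ) : ℂ) = z⁻¹ * (1 - z)⁻¹ := by push_cast; rw [hr, mul_inv]
  have hint : IsIntegral ℤ (r⁻¹ : ℚ) := by
    rw [← isIntegral_algebraMap_iff (algebraMap ℚ ℂ).injective, eq_ratCast, hr']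
    exact (isIntegral_inv_of_pow_eq hN hz h).mul (isIntegral_inv_of_pow_eq hN hz' h')
  obtain ⟨k, hk⟩ := IsIntegrallyClosed.isIntegral_iff.1 hint
  rw [algebraMap_int_eq, eq_intCast] at hk
  refine ⟨k, hk, ?_, ?_⟩
  · have hr0 : (0 : ℝ) < r := by
      have : ((r : ℝ) : ℂ) = (normSq z : ℂ) := by
        rw [← mul_one_sub_eq_normSq_of_pow_eq hN h, ← hr]; norm_cast
      rw [show (r : ℝ) = normSq z by exact_mod_cast this]
      exact normSq_pos.2 hz
    exact_mod_cast hk ▸ inv_pos.2 (by exact_mod_cast hr0 : (0 : ℚ) < r)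
  · have : ‖((k : ℚ) : ℂ)‖ ≤ 4 := by
      rw [hk, hr', norm_mul]
      nlinarith [norm_inv_le_two_of_pow_eq hN hz h, norm_inv_le_two_of_pow_eq hN hz' h',
        norm_nonneg z⁻¹, norm_nonneg (1 - z)⁻¹]
    rw [Rat.cast_intCast, norm_intCast] at this
    exact_mod_cast (le_abs_self (k : ℝ)).trans this

end Complex

theorem mul_one_sub_eq_of_aeval_kPoly {a : ℚ} {n : ℕ} (hn : 2 ≤ n) {w z : ℂ}
    (hw : aeval w (kPoly a n) = 0) (hw' : aeval w (derivative (kPoly a n)) = 0)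
    (hz : aeval z (kPoly a n) = 0) (hz' : aeval z (derivative (kPoly a n)) = 0) :
    w * (1 - w) = z * (1 - z) := by
  have hN : n - 1 ≠ 0 := by omega
  obtain ⟨hw₁, hw₂⟩ := pow_pred_eq_of_aeval_kPoly (by omega) hw hw'
  obtain ⟨hz₁, hz₂⟩ := pow_pred_eq_of_aeval_kPoly (by omega) hz hz'
  rw [Complex.mul_one_sub_eq_normSq_of_pow_eq hN hw₁,
    Complex.mul_one_sub_eq_normSq_of_pow_eq hN hz₁]
  congr 1
  refine (pow_left_inj₀ (Complex.normSq_nonneg _) (Complex.normSq_nonneg _) hN).1 ?_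
  rw [Complex.normSq_pow_eq_sq_of_pow_eq (c := ((a ^ n : ℚ) : ℝ)) hN hw₁ (by simpa using hw₂),
    Complex.normSq_pow_eq_sq_of_pow_eq (c := ((a ^ n : ℚ) : ℝ)) hN hz₁ (by simpa using hz₂)]

theorem exists_rat_eq_mul_one_sub_of_aeval_kPoly {a : ℚ} {n : ℕ} (hn : 2 ≤ n) {z : ℂ}
    (hK : aeval z (kPoly a n) = 0) (hK' : aeval z (derivative (kPoly a n)) = 0) :
    ∃ r : ℚ, (r : ℂ) = z * (1 - z) := by
  have hz : IsIntegral ℚ z := IsAlgebraic.isIntegral ⟨_, derivative_kPoly_ne_zero a hn, hK'⟩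
  have hq : (X ^ 2 - X + C (z * (1 - z))).Monic := by monicity!
  refine exists_algebraMap_eq_of_minpoly_map_dvd hz
    (minpoly_map_dvd_of_forall_isRoot hz hq.ne_zero fun w hw ↦ ?_)
  rw [IsRoot, eval_map_algebraMap] at hw
  have := mul_one_sub_eq_of_aeval_kPoly hn
    (aeval_eq_zero_of_dvd_aeval_eq_zero (minpoly.dvd ℚ z hK) hw)
    (aeval_eq_zero_of_dvd_aeval_eq_zero (minpoly.dvd ℚ z hK') hw) hK hK'
  simp only [IsRoot, eval_add, eval_sub, eval_pow, eval_X, eval_C]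
  linear_combination -this

theorem Rat.prime_pow_pow_pred_mul_sq_pow_ne_one {p : ℕ} [Fact p.Prime] {e n : ℕ}
    (he : e = 1 ∨ e = 2) (hn : 2 ≤ n) (a : ℚ) : ((p : ℚ) ^ e) ^ (n - 1) * (a ^ 2) ^ n ≠ 1 := by
  intro h
  have ha : a ≠ 0 := by
    rintro rfl
    simp [zero_pow (show n ≠ 0 by omega)] at h
  have hp : (p : ℚ) ≠ 0 := by exact_mod_cast (Fact.out : p.Prime).ne_zero
  have hv := congrArg (padicValRat p) h
  rw [padicValRat.mul (by positivity) (by positivity), padicValRat.pow, padicValRat.pow,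
    padicValRat.pow, padicValRat.pow, padicValRat.self (Fact.out : p.Prime).one_lt,
    padicValRat.one] at hv
  -- `hv` reads `(n - 1) e + 2 n v_p(a) = 0`, impossible as `0 < (n - 1) e < 2 n`.
  obtain ⟨m, rfl⟩ := Nat.exists_eq_add_of_le' hn
  push_cast [Nat.add_sub_cancel] at hv
  rcases he with rfl | rfl <;> rcases le_or_gt 0 (padicValRat p a) with hv0 | hv0 <;>
    push_cast at hv <;> nlinarith

theorem Rat.sq_eq_one_of_pow_pred_mul_sq_pow_eq_one {k : ℤ} (hk0 : 0 < k) (hk4 : k ≤ 4)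
    {a : ℚ} {n : ℕ} (hn : 2 ≤ n) (h : (k : ℚ) ^ (n - 1) * (a ^ 2) ^ n = 1) : a ^ 2 = 1 := by
  have : Fact (Nat.Prime 2) := ⟨Nat.prime_two⟩
  have : Fact (Nat.Prime 3) := ⟨Nat.prime_three⟩
  interval_cases k
  · rw [Int.cast_one, one_pow, one_mul] at h
    exact (pow_eq_one_iff_of_nonneg (sq_nonneg a) (by omega)).1 h
  · exact absurd (by simpa using h) (prime_pow_pow_pred_mul_sq_pow_ne_one (p := 2) (e := 1)
      (by simp) hn a)
  · exact absurd (by simpa using h) (prime_pow_pow_pred_mul_sq_pow_ne_one (p := 3) (e := 1)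
      (by simp) hn a)
  · exact absurd (by norm_num; simpa using h) (prime_pow_pow_pred_mul_sq_pow_ne_one (p := 2)
      (e := 2) (by simp) hn a)

open Polynomial in
theorem stmt_11 (a : ℚ) (ha1 : a ≠ 1) (ha2 : a ≠ -1) (n : ℕ) (hn : 2 ≤ n) :
    Squarefree (X ^ n + (1 - X) ^ n + C (a ^ n) : ℚ[X]) := by
  change Squarefree (kPoly a n)
  rw [← PerfectField.separable_iff_squarefree, Separable,
    isCoprime_iff_aeval_ne_zero_of_isAlgClosed ℚ ℂ]
  intro z
  by_contra! ⟨hK, hK'⟩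
  obtain ⟨h₁, h₂⟩ := pow_pred_eq_of_aeval_kPoly (by omega) hK hK'
  obtain ⟨r, hr⟩ := exists_rat_eq_mul_one_sub_of_aeval_kPoly hn hK hK'
  obtain ⟨k, hk, hk0, hk4⟩ := Complex.exists_int_eq_inv_of_pow_eq (by omega) h₁ hr
  have hr_pow : r ^ (n - 1) = (a ^ 2) ^ n := by
    have : ((r ^ (n - 1) : ℚ) : ℂ) = (((a ^ 2) ^ n : ℚ) : ℂ) := by
      push_cast
      rw [hr, mul_pow, ← h₁, h₂, eq_ratCast]
      ring
    exact_mod_cast this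
  have hr0 : r ≠ 0 := by rintro rfl; simp at hk; omega
  have ha := Rat.sq_eq_one_of_pow_pred_mul_sq_pow_eq_one hk0 hk4 hn (by
    rw [hk, ← hr_pow, inv_pow, inv_mul_cancel₀ (pow_ne_zero _ hr0)])
  exact (sq_eq_one_iff.1 ha).elim ha1 ha2
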